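/- Let M be a matroid, Q, R disjoint subsets of E(M) with k := κ_M(Q,R), and let (U, E(M)−U) be a partition of E(M) with Q ⊆ U, R ⊆ E(M)−U and λ_M(U) ≤ k. If e ∈ E(M) − (U ∪ R) satisfies κ_{M/e}(Q,R) < k, then κ_{M/e}(U,R) < κ_M(U,R). -/

import Mathlib

open Set

variable {α : Type*}

/-- The rank of a set `X` in a matroid `M`: the supremum of cardinalities of
independent subsets of `X`. -/
noncomputable def Matroid.rk' (M : Matroid α) (X : Set α) : ℕ :=
  sSup {n | ∃ I, M.Indep I ∧ I ⊆ X ∧ I.ncard = n}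

/-- The connectivity function `λ_M(X) = r(X) + r(E \ X) - r(M)`. -/
noncomputable def Matroid.lam (M : Matroid α) (X : Set α) : ℕ :=
  M.rk' X + M.rk' (M.E \ X) - M.rk' M.E

/-- The connectivity `κ_M(Q,R)` between disjoint sets `Q` and `R`. -/
noncomputable def Matroid.kappa (M : Matroid α) (Q R : Set α) : ℕ :=
  sInf {k | ∃ X, Q ⊆ X ∧ X ⊆ M.E \ R ∧ M.lam X = k}

/-- Deletion of a set of elements. -/
def Matroid.del (M : Matroid α) (D : Set α) : Matroid α := M.restrict (M.E \ D)

/-- Contraction of a set of elements, defined via duality: `M / C = (M* \ C)*`. -/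
def Matroid.con (M : Matroid α) (C : Set α) : Matroid α := (M✶.del C)✶

/-- `N` is a minor of `M` if it is obtained by contracting a set `C` and deleting a
disjoint set `D`. -/
def Matroid.IsMinorOf (N M : Matroid α) : Prop :=
  ∃ C D, C ⊆ M.E ∧ D ⊆ M.E ∧ Disjoint C D ∧ N = (M.con C).del D

/-- `e` is deletable with respect to `(Q,R)`. -/
noncomputable def Matroid.Deletable (M : Matroid α) (Q R : Set α) (e : α) : Prop :=
  (M.del {e}).kappa Q R = M.kappa Q R

/-- `e` is contractible with respect to `(Q,R)`. -/
noncomputable def Matroid.Contractible (M : Matroid α) (Q R : Set α) (e : α) : Prop :=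
  (M.con {e}).kappa Q R = M.kappa Q R

/-- `e` is flexible with respect to `(Q,R)` if it is both deletable and contractible. -/
noncomputable def Matroid.Flexible (M : Matroid α) (Q R : Set α) (e : α) : Prop :=
  M.Deletable Q R e ∧ M.Contractible Q R e

/-- The local connectivity `⊓_M(A,B) = r(A) + r(B) - r(A ∪ B)`. -/
noncomputable def Matroid.localConn (M : Matroid α) (A B : Set α) : ℕ :=
  M.rk' A + M.rk' B - M.rk' (A ∪ B)

/-!
Let `X` attain `κ_{M/e}(Q,R)`. Contracting `e` lowers `λ(X)` by one if `e` is a non-loop in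
the closure of `X`, and leaves it unchanged otherwise; since `λ_{M/e}(X) < k ≤ λ_M(X)`, the
element `e` is a non-loop in `cl(X)` and `λ_M(X) = k`. Uncrossing `X` with `U` by submodularity
of `λ` gives `λ_M(X ∪ U) ≤ k`, and `e ∈ cl(X ∪ U)`, so
`κ_{M/e}(U,R) ≤ λ_{M/e}(X ∪ U) < k = κ_M(U,R)`.
-/

namespace Matroid

variable {M : Matroid α} {C I X Y Q R U : Set α} {e : α}

lemma con_eq_contract (M : Matroid α) (C : Set α) : M.con C = M ／ C := rfl

lemma eRk_contract_add_eRk (M : Matroid α) (hXC : Disjoint X C) :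
    (M ／ C).eRk X + M.eRk C = M.eRk (X ∪ C) := by
  obtain ⟨J, hJ⟩ := M.exists_isBasis' C
  obtain ⟨K, hK, hJK⟩ := hJ.indep.subset_isBasis'_of_subset (hJ.subset.trans subset_union_right)
  have hKC : K ∩ C = J :=
    (hJ.eq_of_subset_indep (hK.indep.inter_right C) (subset_inter hJK hJ.subset)
      inter_subset_right).symm
  have hcon := hK.contract_isBasis' hJ (hK.indep.subset (union_subset sdiff_subset hJK))
  rw [union_sdiff_cancel_right hXC.inter_eq.subset] at hcon
  rw [hcon.eRk_eq_encard, hJ.eRk_eq_encard, hK.eRk_eq_encard, ← hKC,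
    ← encard_union_eq disjoint_sdiff_inter, sdiff_union_inter]

section RankFinite

variable [M.RankFinite]

lemma IsBasis'.rk'_eq_ncard (hI : M.IsBasis' I X) : M.rk' X = I.ncard := by
  refine IsGreatest.csSup_eq ⟨⟨I, hI.indep, hI.subset, rfl⟩, ?_⟩
  rintro n ⟨J, hJ, hJX, rfl⟩
  have h := hJ.encard_le_eRk_of_subset hJX
  rw [← hI.encard_eq_eRk, ← hJ.finite.cast_ncard_eq, ← hI.indep.finite.cast_ncard_eq] at h
  exact_mod_cast h

variable (M) in
lemma natCast_rk' (X : Set α) : (M.rk' X : ℕ∞) = M.eRk X := by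
  obtain ⟨I, hI⟩ := M.exists_isBasis' X
  rw [hI.rk'_eq_ncard, hI.indep.finite.cast_ncard_eq, hI.encard_eq_eRk]

lemma rk'_mono (hXY : X ⊆ Y) : M.rk' X ≤ M.rk' Y := by
  have h := M.eRk_mono hXY
  rw [← natCast_rk', ← natCast_rk'] at h
  exact_mod_cast h

variable (M) in
lemma rk'_inter_add_rk'_union_le (X Y : Set α) :
    M.rk' (X ∩ Y) + M.rk' (X ∪ Y) ≤ M.rk' X + M.rk' Y := by
  have h := M.eRk_inter_add_eRk_union_le X Y
  simp only [← natCast_rk'] at h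
  exact_mod_cast h

variable (M) in
lemma rk'_union_le_rk'_add_rk' (X Y : Set α) : M.rk' (X ∪ Y) ≤ M.rk' X + M.rk' Y := by
  have h := M.eRk_union_le_eRk_add_eRk X Y
  simp only [← natCast_rk'] at h
  exact_mod_cast h

variable (M) in
lemma rk'_contract_add_rk' (hXC : Disjoint X C) :
    (M ／ C).rk' X + M.rk' C = M.rk' (X ∪ C) := by
  have h := M.eRk_contract_add_eRk hXC
  simp only [← natCast_rk'] at h
  exact_mod_cast h

variable (M) in
lemma rk'_singleton_le_one (e : α) : M.rk' {e} ≤ 1 := by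
  have h := M.eRk_singleton_le e
  rw [← natCast_rk'] at h
  exact_mod_cast h

lemma rk'_singleton_eq_one_iff : M.rk' {e} = 1 ↔ M.IsNonloop e := by
  rw [← eRk_singleton_eq_one_iff, ← natCast_rk', Nat.cast_eq_one]

lemma rk'_insert_of_mem_closure (he : e ∈ M.closure X) : M.rk' (insert e X) = M.rk' X := by
  rw [← Nat.cast_inj (R := ℕ∞), natCast_rk', natCast_rk', ← eRk_insert_closure_eq,
    insert_eq_of_mem he, eRk_closure_eq]

lemma mem_closure_of_rk'_insert_le (he : e ∈ M.E) (h : M.rk' (insert e X) ≤ M.rk' X) :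
    e ∈ M.closure X := by
  by_contra hcl
  have h' := eRk_insert_eq_add_one ⟨he, hcl⟩
  rw [← natCast_rk', ← natCast_rk'] at h'
  norm_cast at h'
  omega

variable (M) in
lemma lam_add_rk'_ground (X : Set α) : M.lam X + M.rk' M.E = M.rk' X + M.rk' (M.E \ X) := by
  have hE : M.rk' M.E ≤ M.rk' (X ∪ M.E \ X) := by
    rw [union_sdiff_self]
    exact rk'_mono subset_union_right
  have hsub := M.rk'_union_le_rk'_add_rk' X (M.E \ X)
  unfold lam
  omega

variable (M) in
lemma lam_union_add_lam_inter_le (X Y : Set α) :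
    M.lam (X ∪ Y) + M.lam (X ∩ Y) ≤ M.lam X + M.lam Y := by
  have hX := M.lam_add_rk'_ground X
  have hY := M.lam_add_rk'_ground Y
  have hXuY := M.lam_add_rk'_ground (X ∪ Y)
  have hXiY := M.lam_add_rk'_ground (X ∩ Y)
  have hsub := M.rk'_inter_add_rk'_union_le X Y
  have hsubc := M.rk'_inter_add_rk'_union_le (M.E \ X) (M.E \ Y)
  rw [sdiff_inter_sdiff, ← sdiff_inter] at hsubc
  omega

lemma lam_contractElem_add (he : e ∈ M.E) (heX : e ∉ X) :
    (M ／ {e}).lam X + M.rk' X + M.rk' {e} = M.lam X + M.rk' (insert e X) := by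
  have hc := (M ／ {e}).lam_add_rk'_ground X
  have hX := M.rk'_contract_add_rk' (disjoint_singleton_right.2 heX)
  have hE := M.rk'_contract_add_rk' (X := M.E \ {e}) disjoint_sdiff_left
  have hEX := M.rk'_contract_add_rk' (X := (M.E \ {e}) \ X)
    (disjoint_sdiff_left.mono_left sdiff_subset)
  rw [contract_ground, sdiff_sdiff_comm] at hc
  rw [sdiff_sdiff_comm] at hEX
  rw [union_singleton] at hX
  rw [sdiff_union_of_subset (singleton_subset_iff.2 he)] at hE
  rw [sdiff_union_of_subset (singleton_subset_iff.2 (show e ∈ M.E \ X from ⟨he, heX⟩))] at hEX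
  have hM := M.lam_add_rk'_ground X
  omega

lemma lam_contractElem_add_one (hnl : M.IsNonloop e) (hcl : e ∈ M.closure X) (heX : e ∉ X) :
    (M ／ {e}).lam X + 1 = M.lam X := by
  have h := lam_contractElem_add hnl.mem_ground heX
  rw [rk'_insert_of_mem_closure hcl, rk'_singleton_eq_one_iff.2 hnl] at h
  omega

lemma isNonloop_and_mem_closure_of_lam_contractElem_lt (heX : e ∉ X)
    (h : (M ／ {e}).lam X < M.lam X) : M.IsNonloop e ∧ e ∈ M.closure X := by
  have he : e ∈ M.E := by
    by_contra he
    rw [contractElem_eq_self he] at h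
    exact h.false
  have hadd := lam_contractElem_add he heX
  have hmono := rk'_mono (M := M) (subset_insert e X)
  have hle := M.rk'_singleton_le_one e
  exact ⟨rk'_singleton_eq_one_iff.1 (by omega), mem_closure_of_rk'_insert_le he (by omega)⟩

end RankFinite

lemma kappa_le_lam (hQX : Q ⊆ X) (hXR : X ⊆ M.E \ R) : M.kappa Q R ≤ M.lam X :=
  Nat.sInf_le ⟨X, hQX, hXR, rfl⟩

lemma exists_lam_eq_kappa (hQR : Q ⊆ M.E \ R) :
    ∃ X, Q ⊆ X ∧ X ⊆ M.E \ R ∧ M.lam X = M.kappa Q R :=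
  Nat.sInf_mem (s := {k | ∃ X, Q ⊆ X ∧ X ⊆ M.E \ R ∧ M.lam X = k})
    ⟨_, M.E \ R, hQR, Subset.rfl, rfl⟩

lemma kappa_mono_left (hQU : Q ⊆ U) (hUR : U ⊆ M.E \ R) : M.kappa Q R ≤ M.kappa U R := by
  obtain ⟨X, hUX, hXR, hX⟩ := exists_lam_eq_kappa hUR
  exact hX ▸ kappa_le_lam (hQU.trans hUX) hXR

lemma kappa_eq_of_lam_le (hQU : Q ⊆ U) (hUR : U ⊆ M.E \ R) (hU : M.lam U ≤ M.kappa Q R) :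
    M.kappa U R = M.kappa Q R :=
  ((kappa_le_lam Subset.rfl hUR).trans hU).antisymm (kappa_mono_left hQU hUR)

lemma lam_union_le_kappa [M.RankFinite] (hQX : Q ⊆ X) (hQU : Q ⊆ U) (hXR : X ⊆ M.E \ R)
    (hX : M.lam X ≤ M.kappa Q R) (hU : M.lam U ≤ M.kappa Q R) :
    M.lam (X ∪ U) ≤ M.kappa Q R := by
  have hsub := M.lam_union_add_lam_inter_le X U
  have hXU := kappa_le_lam (subset_inter hQX hQU) (inter_subset_left.trans hXR)
  omega

end Matroid

theorem stmt_4_general (M : Matroid α) [M.Finite] (Q R U : Set α)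
    (hU : U ⊆ M.E) (k : ℕ) (hk : k = M.kappa Q R)
    (hQU : Q ⊆ U) (hRU : R ⊆ M.E \ U) (hlam : M.lam U ≤ k)
    (e : α) (he : e ∈ M.E \ (U ∪ R)) (hnc : (M.con {e}).kappa Q R < k) :
    (M.con {e}).kappa U R < M.kappa U R := by
  subst hk
  rw [M.con_eq_contract] at hnc ⊢
  have hUe : U ⊆ (M.contract {e}).E \ R := fun x hx =>
    ⟨⟨hU hx, fun hxe => he.2 (Or.inl (hxe ▸ hx))⟩, fun hxR => (hRU hxR).2 hx⟩
  have hUR : U ⊆ M.E \ R := fun x hx => ⟨hU hx, (hUe hx).2⟩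
  obtain ⟨X, hQX, hXe, hXk⟩ := Matroid.exists_lam_eq_kappa (hQU.trans hUe)
  have heX : e ∉ X := fun h => (hXe h).1.2 rfl
  have hXR : X ⊆ M.E \ R := fun x hx => ⟨(hXe hx).1.1, (hXe hx).2⟩
  obtain ⟨hnl, hcl⟩ := Matroid.isNonloop_and_mem_closure_of_lam_contractElem_lt heX
    (hXk ▸ hnc.trans_le (Matroid.kappa_le_lam hQX hXR))
  have hX := Matroid.lam_contractElem_add_one hnl hcl heX
  have hXU := Matroid.lam_union_le_kappa hQX hQU hXR (by omega) hlam
  have hXU' := Matroid.lam_contractElem_add_one hnl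
    (M.closure_subset_closure subset_union_left hcl) (fun h => h.elim heX fun h => he.2 (Or.inl h))
  calc (M.contract {e}).kappa U R ≤ (M.contract {e}).lam (X ∪ U) :=
        Matroid.kappa_le_lam subset_union_right (union_subset hXe hUe)
    _ < M.kappa Q R := by omega
    _ = M.kappa U R := (Matroid.kappa_eq_of_lam_le hQU hUR hlam).symm

theorem stmt_4 (M : Matroid α) [M.Finite] (Q R U : Set α) (hQ : Q ⊆ M.E) (hR : R ⊆ M.E)
    (hU : U ⊆ M.E) (hQR : Disjoint Q R) (k : ℕ) (hk : k = M.kappa Q R)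
    (hQU : Q ⊆ U) (hRU : R ⊆ M.E \ U) (hlam : M.lam U ≤ k)
    (e : α) (he : e ∈ M.E \ (U ∪ R)) (hnc : (M.con {e}).kappa Q R < k) :
    (M.con {e}).kappa U R < M.kappa U R :=
  stmt_4_general M Q R U hU k hk hQU hRU hlam e he hnc
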